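/- Dissipative quantum Ising chain, single-site estimates: in the algebra M₂(ℂ) of 2×2 complex matrices let σ³ := [[1,0],[0,−1]], σ⁺ := [[0,1],[0,0]], σ⁻ := [[0,0],[1,0]], and let |↓⟩ := (0,1)ᵀ ∈ ℂ². For h ∈ ℝ define the linear map G on M₂(ℂ) by G(A) := i h (σ³A − Aσ³) + σ⁺Aσ⁻ − (1/2)(A σ⁺σ⁻ + σ⁺σ⁻ A), and define Q on M₂(ℂ) by Q(A) := ⟨↓|A|↓⟩·1. Then: (a) Q is a projection with range spanned by the identity and Q∘G = G∘Q = 0; in particular the state A ↦ ⟨↓|A|↓⟩ is stationary for e^{tG}; and (b) for every integer n ≥ 1, every t ≥ 0 and every h ∈ ℝ, the linear map (e^{tG}∘(id − Q)) ⊗ id on M₂(ℂ) ⊗ M_n(ℂ) ≅ M_{2n}(ℂ) has operator norm (with respect to the matrix operator norm on M_{2n}(ℂ)) at most 4 e^{−t/2}; i.e. the completely bounded norm bound ‖e^{tG}∘(id−Q)‖_cb ≤ 4 e^{−t/2} holds (the constants M = 4, g = 1/2 of the paper's main assumption). -/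

import Mathlib

noncomputable section
set_option maxHeartbeats 1000000

namespace QMS

/-- The matrix algebra `M_k(ℂ)` with the operator norm, realized as the algebra of
continuous linear endomorphisms of `ℂ^k`. -/
abbrev MatAlg (k : ℕ) : Type :=
  EuclideanSpace ℂ (Fin k) →L[ℂ] EuclideanSpace ℂ (Fin k)

/-- `M₂(ℂ) ⊗ M_n(ℂ) ≅ M_{2n}(ℂ)`, realized as the continuous linear endomorphisms
of `ℂ² ⊗ ℂ^n`. -/
abbrev MatAlg2n (n : ℕ) : Type :=
  EuclideanSpace ℂ (Fin 2 × Fin n) →L[ℂ] EuclideanSpace ℂ (Fin 2 × Fin n)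

/-- The exponential of a continuous linear endomorphism, defined by its power series. -/
def expCLM {E : Type*} [NormedAddCommGroup E] [NormedSpace ℂ E] (T : E →L[ℂ] E) : E →L[ℂ] E :=
  ∑' k : ℕ, ((k.factorial : ℂ))⁻¹ • T ^ k

/-- The Pauli matrix `σ³`. -/
def sigma3 : MatAlg 2 := Matrix.toEuclideanCLM (𝕜 := ℂ) !![1, 0; 0, -1]

/-- The raising operator `σ⁺`. -/
def sigmaPlus : MatAlg 2 := Matrix.toEuclideanCLM (𝕜 := ℂ) !![0, 1; 0, 0]

/-- The lowering operator `σ⁻`. -/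
def sigmaMinus : MatAlg 2 := Matrix.toEuclideanCLM (𝕜 := ℂ) !![0, 0; 1, 0]

/-- The matrix entry `⟨↓|A|↓⟩`, i.e. the `(2,2)` entry of `A`. -/
def downEntry (A : MatAlg 2) : ℂ := (Matrix.toEuclideanCLM (𝕜 := ℂ)).symm A 1 1

/-- Left multiplication by `a` as a super-operator. -/
def mulL (a : MatAlg 2) : MatAlg 2 →L[ℂ] MatAlg 2 := ContinuousLinearMap.mul ℂ (MatAlg 2) a

/-- Right multiplication by `a` as a super-operator. -/
def mulR (a : MatAlg 2) : MatAlg 2 →L[ℂ] MatAlg 2 :=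
  (ContinuousLinearMap.mul ℂ (MatAlg 2)).flip a

/-- The Lindblad generator
`G(A) = i h (σ³A − Aσ³) + σ⁺Aσ⁻ − ½(A σ⁺σ⁻ + σ⁺σ⁻ A)` of the single-site dynamics. -/
def Gising (h : ℝ) : MatAlg 2 →L[ℂ] MatAlg 2 :=
  (Complex.I * (h : ℂ)) • (mulL sigma3 - mulR sigma3) +
    (mulL sigmaPlus).comp (mulR sigmaMinus) -
    (2 : ℂ)⁻¹ • (mulR (sigmaPlus * sigmaMinus) + mulL (sigmaPlus * sigmaMinus))

/-- The projection `Q(A) = ⟨↓|A|↓⟩·1`. -/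
def Qdown : MatAlg 2 →L[ℂ] MatAlg 2 :=
  LinearMap.toContinuousLinearMap
    { toFun := fun A => downEntry A • (1 : MatAlg 2)
      map_add' := fun A B => by
        simp only [downEntry, map_add, Matrix.add_apply]
        exact add_smul (M := MatAlg 2) _ _ _
      map_smul' := fun c A => by simp [downEntry, smul_smul] }

/-- The map `T ⊗ id` on `M₂(ℂ) ⊗ M_n(ℂ) ≅ M_{2n}(ℂ)`, acting as `T` on the first
Kronecker factor and trivially on the second. -/
def tensorId (n : ℕ) (T : MatAlg 2 →L[ℂ] MatAlg 2) (B : MatAlg2n n) : MatAlg2n n :=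
  Matrix.toEuclideanCLM (𝕜 := ℂ) (Matrix.of fun p q : Fin 2 × Fin n =>
    ∑ a : Fin 2, ∑ b : Fin 2,
      (Matrix.toEuclideanCLM (𝕜 := ℂ)).symm
          (T (Matrix.toEuclideanCLM (𝕜 := ℂ) (Matrix.single a b 1))) p.1 q.1 *
        (Matrix.toEuclideanCLM (𝕜 := ℂ)).symm B (a, p.2) (b, q.2))

/-!
The generator is diagonal on the matrix units: `G 1 = 0`, `G E₀₀ = -E₀₀`,
`G E₀₁ = (2ih - ½) E₀₁`, `G E₁₀ = (-2ih - ½) E₁₀`, and the `(2,2)` entry of `G A` always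
vanishes. Hence `Q ∘ G = G ∘ Q = 0`, `⟨↓|·|↓⟩` is invariant under `e^{tG}`, and `e^{tG}(1 - Q)`
sends `E₀₀, E₀₁, E₁₀, E₁₁` to `e^{-t} E₀₀, e^{(2ih - ½)t} E₀₁, e^{(-2ih - ½)t} E₁₀, -e^{-t} E₀₀`.

For any `T` on `M₂(ℂ)`, `(T ⊗ id) B = ∑ T(E_ab)_cd (E_ca ⊗ 1) B (E_bd ⊗ 1)`, and each `E_ca ⊗ 1`
is a partial isometry, so `‖T ⊗ id‖ ≤ ∑ |T(E_ab)_cd|`. For `T = e^{tG}(1 - Q)` this sum is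
`2e^{-t} + 2e^{-t/2} ≤ 4e^{-t/2}`.
-/

open Matrix
open scoped Kronecker

section Exponential

variable {E F : Type*} [NormedAddCommGroup E] [NormedSpace ℂ E] [NormedAddCommGroup F]
  [NormedSpace ℂ F]

theorem expCLM_eq_exp (T : E →L[ℂ] E) : expCLM T = NormedSpace.exp T := by
  rw [NormedSpace.exp_eq_tsum ℂ]
  rfl

theorem expCLM_apply_of_apply_eq_smul [CompleteSpace E] {T : E →L[ℂ] E} {v : E} {μ : ℂ}
    (hv : T v = μ • v) : expCLM T v = Complex.exp μ • v := by
  have hpow : ∀ k : ℕ, (T ^ k) v = μ ^ k • v := by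
    intro k
    induction k with
    | zero => simp
    | succ k ih =>
      rw [pow_succ, mul_apply_eq_comp, hv, map_smul, ih, smul_smul, pow_succ, mul_comm]
  have hT := (NormedSpace.exp_series_hasSum_exp' (𝕂 := ℂ) T).mapL
    (ContinuousLinearMap.apply ℂ E v)
  have hμ := (NormedSpace.exp_series_hasSum_exp' (𝕂 := ℂ) μ).smul_const v
  simp only [ContinuousLinearMap.apply_apply, _root_.smul_apply, hpow, smul_smul] at hT
  rw [expCLM_eq_exp]
  exact hT.unique (by simpa [smul_smul, Complex.exp_eq_exp_ℂ] using hμ)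

theorem expCLM_real_smul_apply_of_apply_eq_smul [CompleteSpace E] {T : E →L[ℂ] E} {v : E} {μ : ℂ}
    (hv : T v = μ • v) (t : ℝ) : expCLM (t • T) v = Complex.exp (t * μ) • v :=
  expCLM_apply_of_apply_eq_smul <| by
    rw [_root_.smul_apply, hv, ← smul_assoc, Complex.real_smul]

theorem comp_expCLM_of_comp_eq_zero [CompleteSpace E] {φ : E →L[ℂ] F} {T : E →L[ℂ] E}
    (h : φ ∘L T = 0) : φ ∘L expCLM T = φ := by
  have hterm : ∀ k : ℕ, φ ∘L (((k.factorial : ℂ))⁻¹ • T ^ k) = if k = 0 then φ else 0 := by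
    rintro (_ | k)
    · simp [ContinuousLinearMap.one_def]
    · rw [ContinuousLinearMap.comp_smul, pow_succ', ContinuousLinearMap.mul_def,
        ← ContinuousLinearMap.comp_assoc, h]
      simp
  have hφ := (NormedSpace.exp_series_hasSum_exp' (𝕂 := ℂ) T).mapL
    (ContinuousLinearMap.compL ℂ E E F φ)
  simp only [ContinuousLinearMap.compL_apply, hterm] at hφ
  rw [expCLM_eq_exp]
  exact hφ.unique (hasSum_ite_eq 0 φ)

theorem comp_expCLM_real_smul_of_comp_eq_zero [CompleteSpace E] {φ : E →L[ℂ] F} {T : E →L[ℂ] E}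
    (h : φ ∘L T = 0) (t : ℝ) : φ ∘L expCLM (t • T) = φ :=
  comp_expCLM_of_comp_eq_zero <| by rw [ContinuousLinearMap.comp_smul, h, smul_zero]

end Exponential

theorem norm_le_one_of_isStarProjection_star_mul_self {A : Type*} [NormedRing A] [StarRing A]
    [CStarRing A] {v : A} (hv : IsStarProjection (star v * v)) : ‖v‖ ≤ 1 := by
  have h := IsStarProjection.norm_le _ hv
  rw [CStarRing.norm_star_mul_self] at h
  nlinarith [norm_nonneg v]

theorem single_kronecker_one_mul_mul_single_kronecker_one_apply {ι κ R : Type*} [Fintype ι]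
    [Fintype κ] [DecidableEq ι] [DecidableEq κ] [CommSemiring R]
    (M : Matrix (ι × κ) (ι × κ) R) (c a b d : ι) (p q : ι × κ) :
    ((single c a 1 ⊗ₖ (1 : Matrix κ κ R)) * M * (single b d 1 ⊗ₖ (1 : Matrix κ κ R)) :
      Matrix (ι × κ) (ι × κ) R) p q =
      if p.1 = c ∧ q.1 = d then M (a, p.2) (b, q.2) else 0 := by
  simp only [Matrix.mul_apply, kroneckerMap_apply, single_apply, ite_and, one_apply, mul_ite,
    mul_one, mul_zero, ite_mul, one_mul, zero_mul, Fintype.sum_prod_type, Finset.sum_ite_eq,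
    Finset.mem_univ, ↓reduceIte, Finset.sum_ite_irrel, Finset.sum_const_zero, Finset.sum_ite_eq']
  split_ifs <;> simp_all

def matUnit (a b : Fin 2) : MatAlg 2 := Matrix.toEuclideanCLM (𝕜 := ℂ) (single a b 1)

section Blocks

variable {n : ℕ}

def blockUnit (n : ℕ) (c a : Fin 2) : MatAlg2n n :=
  Matrix.toEuclideanCLM (𝕜 := ℂ) (single c a 1 ⊗ₖ (1 : Matrix (Fin n) (Fin n) ℂ))

theorem blockUnit_mul_blockUnit (c a b : Fin 2) :
    blockUnit n c a * blockUnit n a b = blockUnit n c b := by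
  rw [blockUnit, blockUnit, ← map_mul, ← mul_kronecker_mul, single_mul_single_same, mul_one,
    one_mul, blockUnit]

theorem star_blockUnit (c a : Fin 2) : star (blockUnit n c a) = blockUnit n a c := by
  rw [blockUnit, ← map_star, star_eq_conjTranspose, conjTranspose_kronecker, conjTranspose_single,
    conjTranspose_one, star_one, blockUnit]

theorem norm_blockUnit_le (c a : Fin 2) : ‖blockUnit n c a‖ ≤ 1 := by
  refine norm_le_one_of_isStarProjection_star_mul_self ?_
  rw [star_blockUnit, blockUnit_mul_blockUnit]
  exact ⟨blockUnit_mul_blockUnit a a a, star_blockUnit a a⟩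

theorem tensorId_eq_sum (T : MatAlg 2 →L[ℂ] MatAlg 2) (B : MatAlg2n n) :
    tensorId n T B = ∑ a, ∑ b, ∑ c, ∑ d,
      (Matrix.toEuclideanCLM (𝕜 := ℂ)).symm (T (matUnit a b)) c d •
        (blockUnit n c a * B * blockUnit n b d) := by
  conv_rhs => rw [← (Matrix.toEuclideanCLM (𝕜 := ℂ)).apply_symm_apply B]
  simp only [blockUnit, ← map_mul, ← map_smul, ← map_sum, tensorId, matUnit]
  congr 1
  ext p q
  simp only [of_apply, Matrix.sum_apply, Matrix.smul_apply,
    single_kronecker_one_mul_mul_single_kronecker_one_apply, smul_eq_mul, mul_ite, mul_zero,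
    ite_and, Finset.sum_ite_irrel, Finset.sum_const_zero, Finset.sum_ite_eq, Finset.mem_univ,
    if_true]

theorem norm_tensorId_le (T : MatAlg 2 →L[ℂ] MatAlg 2) (B : MatAlg2n n) :
    ‖tensorId n T B‖ ≤ (∑ a, ∑ b, ∑ c, ∑ d,
      ‖(Matrix.toEuclideanCLM (𝕜 := ℂ)).symm (T (matUnit a b)) c d‖) * ‖B‖ := by
  have hblock (c a b d : Fin 2) : ‖blockUnit n c a * B * blockUnit n b d‖ ≤ ‖B‖ :=
    calc ‖blockUnit n c a * B * blockUnit n b d‖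
        ≤ ‖blockUnit n c a‖ * ‖B‖ * ‖blockUnit n b d‖ := norm_mul₃_le
      _ ≤ 1 * ‖B‖ * 1 := by gcongr <;> exact norm_blockUnit_le _ _
      _ = ‖B‖ := by ring
  rw [tensorId_eq_sum]
  simp only [Finset.sum_mul]
  refine (norm_sum_le _ _).trans <| Finset.sum_le_sum fun a _ => ?_
  refine (norm_sum_le _ _).trans <| Finset.sum_le_sum fun b _ => ?_
  refine (norm_sum_le _ _).trans <| Finset.sum_le_sum fun c _ => ?_
  refine (norm_sum_le _ _).trans <| Finset.sum_le_sum fun d _ => ?_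
  rw [norm_smul]
  exact mul_le_mul_of_nonneg_left (hblock c a b d) (norm_nonneg _)

end Blocks

section Ising

variable (h : ℝ)

theorem Gising_toEuclideanCLM (M : Matrix (Fin 2) (Fin 2) ℂ) :
    Gising h (Matrix.toEuclideanCLM (𝕜 := ℂ) M) = Matrix.toEuclideanCLM (𝕜 := ℂ)
      ((Complex.I * h) • (!![1, 0; 0, -1] * M - M * !![1, 0; 0, -1]) +
        !![0, 1; 0, 0] * M * !![0, 0; 1, 0] -
        (2 : ℂ)⁻¹ • (M * (!![0, 1; 0, 0] * !![0, 0; 1, 0]) +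
          !![0, 1; 0, 0] * !![0, 0; 1, 0] * M)) := by
  simp only [Gising, mulL, mulR, sigma3, sigmaPlus, sigmaMinus, map_add, map_sub, map_smul,
    map_mul, _root_.add_apply, _root_.sub_apply, _root_.smul_apply,
    ContinuousLinearMap.comp_apply, ContinuousLinearMap.flip_apply,
    ContinuousLinearMap.mul_apply', mul_assoc]

theorem Gising_one : Gising h 1 = 0 := by
  rw [← map_one (Matrix.toEuclideanCLM (𝕜 := ℂ)), Gising_toEuclideanCLM, ← map_zero
    (Matrix.toEuclideanCLM (𝕜 := ℂ))]
  congr 1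
  ext i j
  fin_cases i <;> fin_cases j <;> norm_num

theorem Gising_matUnit_zero_zero : Gising h (matUnit 0 0) = (-1 : ℂ) • matUnit 0 0 := by
  rw [matUnit, Gising_toEuclideanCLM, ← map_smul]
  congr 1
  ext i j
  fin_cases i <;> fin_cases j <;> norm_num [vecMul, dotProduct, Fin.sum_univ_two, single_apply]

theorem Gising_matUnit_zero_one :
    Gising h (matUnit 0 1) = ((2 * h : ℝ) * Complex.I - 2⁻¹) • matUnit 0 1 := by
  rw [matUnit, Gising_toEuclideanCLM, ← map_smul]
  congr 1
  ext i j
  fin_cases i <;> fin_cases j <;> norm_num [vecMul, dotProduct, Fin.sum_univ_two, single_apply,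
    mul_assoc, mul_comm, mul_left_comm]

theorem Gising_matUnit_one_zero :
    Gising h (matUnit 1 0) = ((-2 * h : ℝ) * Complex.I - 2⁻¹) • matUnit 1 0 := by
  rw [matUnit, Gising_toEuclideanCLM, ← map_smul]
  congr 1
  ext i j
  fin_cases i <;> fin_cases j <;> norm_num [vecMul, dotProduct, Fin.sum_univ_two, single_apply,
    mul_assoc, mul_comm, mul_left_comm]

theorem downEntry_Gising (A : MatAlg 2) : downEntry (Gising h A) = 0 := by
  rw [← (Matrix.toEuclideanCLM (𝕜 := ℂ)).apply_symm_apply A, Gising_toEuclideanCLM, downEntry,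
    StarAlgEquiv.symm_apply_apply]
  simp [Matrix.mul_apply, vecMul, dotProduct, Fin.sum_univ_two]

end Ising

section Projection

theorem Qdown_apply (A : MatAlg 2) : Qdown A = downEntry A • 1 := rfl

theorem downEntry_smul_one (c : ℂ) : downEntry (c • 1) = c := by
  simp [downEntry]

theorem downEntry_one : downEntry 1 = 1 := by
  simpa using downEntry_smul_one 1

theorem downEntry_matUnit (a b : Fin 2) :
    downEntry (matUnit a b) = if a = 1 ∧ b = 1 then 1 else 0 := by
  simp [downEntry, matUnit, single_apply]

theorem one_eq_matUnit_add_matUnit : (1 : MatAlg 2) = matUnit 0 0 + matUnit 1 1 := by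
  rw [matUnit, matUnit, ← map_add, ← map_one (Matrix.toEuclideanCLM (𝕜 := ℂ))]
  congr 1
  ext i j
  fin_cases i <;> fin_cases j <;> simp

theorem one_sub_Qdown_matUnit {a b : Fin 2} (hab : ¬(a = 1 ∧ b = 1)) :
    (1 - Qdown) (matUnit a b) = matUnit a b := by
  rw [_root_.sub_apply, one_apply_eq_self, Qdown_apply, downEntry_matUnit, if_neg hab,
    zero_smul ℂ (1 : MatAlg 2), sub_zero]

theorem one_sub_Qdown_matUnit_one_one : (1 - Qdown) (matUnit 1 1) = -matUnit 0 0 := by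
  rw [_root_.sub_apply, one_apply_eq_self, Qdown_apply, downEntry_matUnit, if_pos ⟨rfl, rfl⟩,
    one_smul, one_eq_matUnit_add_matUnit]
  abel

theorem Qdown_comp_Qdown : Qdown ∘L Qdown = Qdown := by
  ext1 A
  simp [Qdown_apply, downEntry_one]

theorem Qdown_comp_Gising (h : ℝ) : Qdown ∘L Gising h = 0 := by
  ext1 A
  rw [ContinuousLinearMap.comp_apply, _root_.zero_apply, Qdown_apply,
    downEntry_Gising, zero_smul ℂ (1 : MatAlg 2)]

theorem Gising_comp_Qdown (h : ℝ) : Gising h ∘L Qdown = 0 := by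
  ext1 A
  rw [ContinuousLinearMap.comp_apply, _root_.zero_apply, Qdown_apply, map_smul,
    Gising_one]
  exact smul_zero (M := ℂ) (A := MatAlg 2) _

theorem downEntry_expCLM_Gising (h t : ℝ) (A : MatAlg 2) :
    downEntry (expCLM (t • Gising h) A) = downEntry A := by
  have hQ := comp_expCLM_real_smul_of_comp_eq_zero (Qdown_comp_Gising h) t
  simpa [Qdown_apply, downEntry_smul_one] using congrArg (fun φ => downEntry (φ A)) hQ

end Projection

theorem sum_norm_symm_smul_matUnit (k : ℂ) (a b : Fin 2) :
    ∑ c, ∑ d, ‖(Matrix.toEuclideanCLM (𝕜 := ℂ)).symm (k • matUnit a b) c d‖ = ‖k‖ := by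
  simp [matUnit, single_apply, apply_ite, ite_and]

theorem norm_cexp_mul_ofReal_mul_I_sub_half (t s : ℝ) :
    ‖Complex.exp (t * (s * Complex.I - 2⁻¹))‖ = Real.exp (-t / 2) := by
  rw [Complex.norm_exp]
  congr 1
  simp [Complex.mul_re, div_eq_mul_inv]

theorem sum_norm_symm_expCLM_Gising_comp_one_sub_Qdown (h t : ℝ) :
    ∑ a, ∑ b, ∑ c, ∑ d, ‖(Matrix.toEuclideanCLM (𝕜 := ℂ)).symm
      ((expCLM (t • Gising h) ∘L (1 - Qdown)) (matUnit a b)) c d‖ =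
      2 * Real.exp (-t) + 2 * Real.exp (-t / 2) := by
  have hE00 := expCLM_real_smul_apply_of_apply_eq_smul (Gising_matUnit_zero_zero h) t
  have hE01 := expCLM_real_smul_apply_of_apply_eq_smul (Gising_matUnit_zero_one h) t
  have hE10 := expCLM_real_smul_apply_of_apply_eq_smul (Gising_matUnit_one_zero h) t
  have hentry : ∀ a b : Fin 2, ∑ c, ∑ d, ‖(Matrix.toEuclideanCLM (𝕜 := ℂ)).symm
      ((expCLM (t • Gising h) ∘L (1 - Qdown)) (matUnit a b)) c d‖ =
      if a = b then Real.exp (-t) else Real.exp (-t / 2) := by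
    simp only [Fin.forall_fin_two, ContinuousLinearMap.comp_apply]
    refine ⟨⟨?_, ?_⟩, ?_, ?_⟩
    · rw [one_sub_Qdown_matUnit (by decide), hE00, sum_norm_symm_smul_matUnit, if_true]
      simp [Complex.norm_exp]
    · rw [one_sub_Qdown_matUnit (by decide), hE01, sum_norm_symm_smul_matUnit,
        norm_cexp_mul_ofReal_mul_I_sub_half, if_neg (by decide)]
    · rw [one_sub_Qdown_matUnit (by decide), hE10, sum_norm_symm_smul_matUnit,
        norm_cexp_mul_ofReal_mul_I_sub_half, if_neg (by decide)]
    · rw [one_sub_Qdown_matUnit_one_one, map_neg, hE00, ← neg_smul, sum_norm_symm_smul_matUnit,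
        if_true]
      simp [Complex.norm_exp]
  simp only [hentry]
  simp only [Fin.sum_univ_two, Fin.isValue, ↓reduceIte, zero_ne_one, one_ne_zero]
  ring

/-- Dissipative quantum Ising chain: single-site estimates. -/
theorem dissipative_ising_single_site (h : ℝ) :
    (Qdown ∘L Qdown = Qdown) ∧
    (∀ A : MatAlg 2, ∃ c : ℂ, Qdown A = c • (1 : MatAlg 2)) ∧
    Qdown (1 : MatAlg 2) = 1 ∧
    Qdown ∘L Gising h = 0 ∧ Gising h ∘L Qdown = 0 ∧
    (∀ t : ℝ, 0 ≤ t → ∀ A : MatAlg 2,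
      downEntry (expCLM (t • Gising h) A) = downEntry A) ∧
    (∀ n : ℕ, 1 ≤ n → ∀ t : ℝ, 0 ≤ t → ∀ B : MatAlg2n n,
      ‖tensorId n (expCLM (t • Gising h) ∘L (1 - Qdown)) B‖ ≤
        4 * Real.exp (-t / 2) * ‖B‖) := by
  refine ⟨Qdown_comp_Qdown, fun A => ⟨downEntry A, rfl⟩, ?_, Qdown_comp_Gising h,
    Gising_comp_Qdown h, fun t _ => downEntry_expCLM_Gising h t, fun n _ t ht B => ?_⟩
  · rw [Qdown_apply, downEntry_one, one_smul]
  · have hdecay : Real.exp (-t) ≤ Real.exp (-t / 2) := Real.exp_le_exp.mpr (by linarith)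
    calc ‖tensorId n (expCLM (t • Gising h) ∘L (1 - Qdown)) B‖
        ≤ (2 * Real.exp (-t) + 2 * Real.exp (-t / 2)) * ‖B‖ := by
          rw [← sum_norm_symm_expCLM_Gising_comp_one_sub_Qdown h t]
          exact norm_tensorId_le _ B
      _ ≤ 4 * Real.exp (-t / 2) * ‖B‖ := by gcongr; linarith

end QMS
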